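/- For every integer n ≥ 1 and every k with 1 ≤ k ≤ n, the identity Σ_{t=0}^{n−1} (K_t^{(n−1)}(k−1))² = − Σ_{w=1}^n λ(w)·K_w^{(n)}(k) holds, where λ(w) = 2^{n−w}·w·C(w−1, ⌈w/2⌉−1). -/

import Mathlib

/-- The Krawtchouk polynomial `K_k^{(n)}(x) = Σ_{i=0}^k (−1)^i·C(x,i)·C(n−x,k−i)`. -/
def kraw (n k x : ℕ) : ℤ :=
  ∑ i ∈ Finset.range (k + 1),
    (-1 : ℤ) ^ i * (Nat.choose x i : ℤ) * (Nat.choose (n - x) (k - i) : ℤ)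

/-!
Write `Q n k = (1 - X)^k (1 + X)^(n - k)`, whose coefficients are the values `K_w^{(n)}(k)`.
Homogenizing, `Σ_w K_w^{(n)}(k) y^w z^(n-w) = (z - y)^k (z + y)^(n-k)` in any commutative ring.
At `(y, z) = (1, X)` this is the reflection symmetry of `Q n k`, which turns the sum of squares
into `±[X^(n-1)] (Q (n-1) (k-1))^2`. At `(y, z) = (1 + X^2, 2X)` it expresses `±(Q n k)^2` through
the polynomials `(1 + X^2)^w (2X)^(n-w)`. The linear form `F ↦ Σ_j (n - j)₊ F_j` sends these to
`λ(w)` and sends `(1 - X)^2 F` to `[X^(n-1)] F`; since `Q n k = (1 - X) Q (n-1) (k-1)`, both sides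
are `(-1)^(k-1) [X^(n-1)] (Q (n-1) (k-1))^2`.
-/

open Polynomial Finset

theorem coeff_one_sub_X_pow {R : Type*} [CommRing R] (k i : ℕ) :
    ((1 - X : R[X]) ^ k).coeff i = (-1) ^ i * k.choose i := by
  rw [sub_eq_neg_add, add_pow, finsetSum_coeff]
  simp_rw [one_pow, mul_one, neg_pow (X : R[X]), mul_comm, ← mul_assoc, ← C_eq_natCast, ← C_1,
    ← C_neg, ← C_pow, ← C_mul, coeff_C_mul_X_pow]
  rw [sum_ite_eq]
  split_ifs with h
  · ring
  · simp [Nat.choose_eq_zero_of_lt (by simpa using h)]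

theorem coeff_one_sub_X_pow_mul_one_add_X_pow (n k w : ℕ) :
    ((1 - X : ℤ[X]) ^ k * (1 + X) ^ (n - k)).coeff w = kraw n w k := by
  rw [coeff_mul, Nat.sum_antidiagonal_eq_sum_range_succ_mk, kraw]
  simp only [coeff_one_sub_X_pow, coeff_one_add_X_pow]

theorem Polynomial.aeval_homogenize {R A : Type*} [CommSemiring R] [CommSemiring A]
    [Algebra R A] (p : R[X]) (n : ℕ) (g : Fin 2 → A) :
    MvPolynomial.aeval g (p.homogenize n)
      = ∑ x ∈ antidiagonal n, algebraMap R A (p.coeff x.1) * g 0 ^ x.1 * g 1 ^ x.2 := by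
  simp [homogenize, MvPolynomial.aeval_monomial, Finsupp.prod_fintype, mul_assoc]

theorem homogenize_one_sub_X_pow_mul_one_add_X_pow {R : Type*} [CommRing R] {n k : ℕ}
    (hk : k ≤ n) :
    ((1 - X : R[X]) ^ k * (1 + X) ^ (n - k)).homogenize n
      = (MvPolynomial.X 1 - MvPolynomial.X 0) ^ k
          * (MvPolynomial.X 1 + MvPolynomial.X 0) ^ (n - k) := by
  apply homogenize_eq_of_isHomogeneous
  · have hX (i : Fin 2) : (MvPolynomial.X i : MvPolynomial (Fin 2) R).IsHomogeneous 1 :=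
      MvPolynomial.isHomogeneous_X R i
    simpa [Nat.add_sub_cancel' hk] using
      (((hX 1).sub (hX 0)).pow k).mul (((hX 1).add (hX 0)).pow (n - k))
  · simp

theorem sum_antidiagonal_kraw_mul_pow_mul_pow {A : Type*} [CommRing A] {n k : ℕ} (hk : k ≤ n)
    (y z : A) :
    ∑ x ∈ antidiagonal n, (kraw n x.1 k : A) * y ^ x.1 * z ^ x.2
      = (z - y) ^ k * (z + y) ^ (n - k) := by
  have h := congrArg (MvPolynomial.aeval ![y, z])
    (homogenize_one_sub_X_pow_mul_one_add_X_pow (R := ℤ) hk)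
  simpa [aeval_homogenize, coeff_one_sub_X_pow_mul_one_add_X_pow] using h

theorem sum_range_kraw_sq {n k : ℕ} (hk : k ≤ n) :
    ∑ t ∈ range (n + 1), kraw n t k ^ 2
      = (-1) ^ k * (((1 - X : ℤ[X]) ^ k * (1 + X) ^ (n - k)) ^ 2).coeff n := by
  set Q : ℤ[X] := (1 - X) ^ k * (1 + X) ^ (n - k)
  have hreflect : ∑ x ∈ antidiagonal n, C (kraw n x.1 k) * X ^ x.2 = C ((-1) ^ k) * Q := by
    have h := sum_antidiagonal_kraw_mul_pow_mul_pow hk (1 : ℤ[X]) X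
    rw [← neg_sub, neg_pow (1 - X : ℤ[X]), add_comm X] at h
    simpa [Q, mul_assoc] using h
  calc ∑ t ∈ range (n + 1), kraw n t k ^ 2
      = ∑ x ∈ antidiagonal n, kraw n x.1 k * (Q * X ^ x.2).coeff n := by
        rw [Nat.sum_antidiagonal_eq_sum_range_succ_mk]
        refine sum_congr rfl fun t ht => ?_
        rw [coeff_mul_X_pow', if_pos (n.sub_le t), Nat.sub_sub_self (mem_range_succ_iff.mp ht),
          coeff_one_sub_X_pow_mul_one_add_X_pow, sq]
    _ = (Q * ∑ x ∈ antidiagonal n, C (kraw n x.1 k) * X ^ x.2).coeff n := by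
        simp [mul_sum, finsetSum_coeff, mul_left_comm]
    _ = (-1) ^ k * (Q ^ 2).coeff n := by
        rw [hreflect, mul_left_comm, ← sq, coeff_C_mul]

theorem sum_range_sub_two_mul_mul_choose_succ (m J : ℕ) :
    ∑ i ∈ range (J + 1), ((m + 1 : ℤ) - 2 * i) * (m + 1).choose i = (m + 1) * m.choose J := by
  induction J with
  | zero => simp
  | succ J ih =>
    have pascal : ((m + 1).choose (J + 1) : ℤ) = m.choose J + m.choose (J + 1) := by
      exact_mod_cast Nat.choose_succ_succ m J
    have absorb : ((m + 1 : ℤ)) * m.choose J = (m + 1).choose (J + 1) * (J + 1) := by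
      exact_mod_cast Nat.add_one_mul_choose_eq m J
    rw [sum_range_succ, ih]
    push_cast
    linear_combination (m + 1 : ℤ) * pascal + 2 * absorb

theorem sum_range_tsub_two_mul_mul_choose (v : ℕ) :
    ∑ i ∈ range (v + 1), ((v - 2 * i : ℕ) : ℤ) * v.choose i
      = v * (v - 1).choose ((v + 1) / 2 - 1) := by
  rcases v with _ | m
  · simp
  have hJ : (m + 1 + 1) / 2 - 1 + 1 ≤ m + 1 + 1 := by omega
  rw [← sum_subset (range_subset_range.mpr hJ)]
  · push_cast
    rw [← sum_range_sub_two_mul_mul_choose_succ]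
    refine sum_congr rfl fun i hi => ?_
    rw [mem_range] at hi
    rw [Nat.cast_sub (by omega)]
    push_cast
    ring
  · intro i _ hi
    rw [mem_range] at hi
    rw [Nat.sub_eq_zero_of_le (by omega), Nat.cast_zero, zero_mul]

-- The truncated subtraction is intended: the weight of `X^j` vanishes for `j ≥ n`.
noncomputable def rampSum (n : ℕ) : ℤ[X] →ₗ[ℤ] ℤ :=
  lsum fun j => ((n - j : ℕ) : ℤ) • LinearMap.id

theorem rampSum_monomial (n j : ℕ) (c : ℤ) : rampSum n (monomial j c) = (n - j : ℕ) * c := by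
  simp [rampSum]

theorem rampSum_one_sub_X_sq_mul (m : ℕ) (H : ℤ[X]) :
    rampSum (m + 1) ((1 - X) ^ 2 * H) = H.coeff m := by
  induction H using Polynomial.induction_on' with
  | add p q hp hq => rw [mul_add, map_add, hp, hq, coeff_add]
  | monomial j c =>
    have hexp : (1 - X : ℤ[X]) ^ 2 * monomial j c
        = monomial j c - monomial (j + 1) (2 * c) + monomial (j + 2) c := by
      simp only [← C_mul_X_pow_eq_monomial, C_mul, C_ofNat]
      ring
    rw [hexp, map_add, map_sub, rampSum_monomial, rampSum_monomial, rampSum_monomial,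
      coeff_monomial]
    split_ifs with hj
    · subst hj
      simp
    · have : ((m + 1 - j : ℕ) : ℤ) - 2 * (m + 1 - (j + 1) : ℕ) + (m + 1 - (j + 2) : ℕ) = 0 := by
        omega
      linear_combination c * this

theorem rampSum_one_add_X_sq_pow_mul_two_mul_X_pow {n v : ℕ} (hv : v ≤ n) :
    rampSum n ((1 + X ^ 2) ^ v * (2 * X) ^ (n - v))
      = 2 ^ (n - v) * v * (v - 1).choose ((v + 1) / 2 - 1) := by
  obtain ⟨w, rfl⟩ := Nat.exists_eq_add_of_le hv
  rw [Nat.add_sub_cancel_left]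
  have hexp : (1 + X ^ 2 : ℤ[X]) ^ v * (2 * X) ^ w
      = ∑ i ∈ range (v + 1), monomial (2 * i + w) (2 ^ w * v.choose i : ℤ) := by
    rw [add_comm, add_pow, sum_mul]
    refine sum_congr rfl fun i _ => ?_
    simp only [← C_mul_X_pow_eq_monomial, C_mul, C_pow, C_ofNat, ← C_eq_natCast]
    ring
  rw [hexp, map_sum, mul_assoc, ← sum_range_tsub_two_mul_mul_choose, mul_sum]
  refine sum_congr rfl fun i _ => ?_
  rw [rampSum_monomial, Nat.add_sub_add_right]
  ring

theorem sum_Icc_mul_kraw_eq_rampSum {n k : ℕ} (hk : k ≤ n) :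
    ∑ w ∈ Icc 1 n, (2 ^ (n - w) * w * (w - 1).choose ((w + 1) / 2 - 1) : ℤ) * kraw n w k
      = (-1) ^ k * rampSum n (((1 - X) ^ k * (1 + X) ^ (n - k)) ^ 2) := by
  have hsubst : ∑ x ∈ antidiagonal n, kraw n x.1 k • ((1 + X ^ 2) ^ x.1 * (2 * X) ^ x.2)
      = ((-1) ^ k : ℤ) • ((1 - X : ℤ[X]) ^ k * (1 + X) ^ (n - k)) ^ 2 := by
    have h := sum_antidiagonal_kraw_mul_pow_mul_pow hk (1 + X ^ 2 : ℤ[X]) (2 * X)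
    rw [show (2 * X - (1 + X ^ 2) : ℤ[X]) = -(1 - X) ^ 2 by ring,
      show (2 * X + (1 + X ^ 2) : ℤ[X]) = (1 + X) ^ 2 by ring, neg_pow ((1 - X : ℤ[X]) ^ 2),
      ← pow_mul, ← pow_mul] at h
    simp only [zsmul_eq_mul, ← mul_assoc, h]
    push_cast
    ring
  rw [← smul_eq_mul, ← map_zsmul, ← hsubst, map_sum, Nat.sum_antidiagonal_eq_sum_range_succ_mk,
    ← sum_subset (s₁ := Icc 1 n) (s₂ := range n.succ)]
  · refine sum_congr rfl fun w hw => ?_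
    rw [map_zsmul, smul_eq_mul, rampSum_one_add_X_sq_pow_mul_two_mul_X_pow (mem_Icc.mp hw).2]
    ring
  · intro w hw
    exact mem_range_succ_iff.mpr (mem_Icc.mp hw).2
  · intro w hw hw'
    obtain rfl : w = 0 := by simp only [mem_range, mem_Icc] at hw hw'; omega
    rw [map_zsmul, rampSum_one_add_X_sq_pow_mul_two_mul_X_pow (Nat.zero_le _)]
    simp

/-- For `n ≥ 1` and `1 ≤ k ≤ n`,
`Σ_{t=0}^{n−1} (K_t^{(n−1)}(k−1))² = −Σ_{w=1}^n λ(w)·K_w^{(n)}(k)` where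
`λ(w) = 2^{n−w}·w·C(w−1,⌈w/2⌉−1)`. -/
theorem krawtchouk_square_sum_identity (n k : ℕ) (hn : 1 ≤ n) (hk1 : 1 ≤ k) (hk2 : k ≤ n) :
    ∑ t ∈ Finset.range n, (kraw (n - 1) t (k - 1)) ^ 2
      = -∑ w ∈ Finset.Icc 1 n,
          (2 ^ (n - w) * w * Nat.choose (w - 1) ((w + 1) / 2 - 1) : ℤ) * kraw n w k := by
  obtain ⟨m, rfl⟩ : ∃ m, n = m + 1 := ⟨n - 1, by omega⟩
  obtain ⟨a, rfl⟩ : ∃ a, k = a + 1 := ⟨k - 1, by omega⟩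
  have hsquare : (1 - X : ℤ[X]) ^ 2 * ((1 - X) ^ a * (1 + X) ^ (m - a)) ^ 2
      = ((1 - X) ^ (a + 1) * (1 + X) ^ (m + 1 - (a + 1))) ^ 2 := by
    rw [Nat.add_sub_add_right]
    ring
  rw [Nat.add_sub_cancel, Nat.add_sub_cancel, sum_range_kraw_sq (by omega),
    sum_Icc_mul_kraw_eq_rampSum hk2, ← rampSum_one_sub_X_sq_mul, hsquare]
  ring
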